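/- arXiv:2404.16318 — 3 statements merged into one kernel-verified Lean document; each statement's English description precedes it below -/
import Mathlib

section
/- Stability of equilibria of the CTWM dynamics: every equilibrium x* ∈ X_eq is Lyapunov stable; more precisely, for every ε > 0 and every x0 with ‖x0 − x*‖_∞ ≤ ε, the solution satisfies ‖φ(t,x0) − x*‖_∞ ≤ ε for all t ≥ 0. -/
open Finset Filter Topology

/-- `m` is a weighted median of the values `x` with respect to weights `w`. -/
def IsWeightedMedian {n : ℕ} (x w : Fin n → ℝ) (m : ℝ) : Prop :=
  (∃ i, x i = m) ∧
  ∑ i ∈ univ.filter (fun i => x i < m), w i ≤ 1 / 2 ∧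
  ∑ i ∈ univ.filter (fun i => m < x i), w i ≤ 1 / 2

/-- `W` is a row-stochastic matrix. -/
def RowStochastic {n : ℕ} (W : Matrix (Fin n) (Fin n) ℝ) : Prop :=
  (∀ i j, 0 ≤ W i j) ∧ ∀ i, ∑ j, W i j = 1

/-- `M` is a cohesive set of the influence network `G(W)`. -/
def Cohesive {n : ℕ} (W : Matrix (Fin n) (Fin n) ℝ) (M : Finset (Fin n)) : Prop :=
  ∀ i ∈ M, (1 : ℝ) / 2 ≤ ∑ j ∈ M, W i j

/-- `M` is a maximal cohesive set of the influence network `G(W)`. -/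
def MaxCohesive {n : ℕ} (W : Matrix (Fin n) (Fin n) ℝ) (M : Finset (Fin n)) : Prop :=
  Cohesive W M ∧ ∀ i ∉ M, ¬ ((1 : ℝ) / 2 < ∑ j ∈ M, W i j)

/-- `Med` is the weighted-median operator: `Med x i` is the weighted median of `x`
with respect to the `i`-th row of `W` that is closest to `x i`. -/
def IsMedSelection {n : ℕ} (W : Matrix (Fin n) (Fin n) ℝ)
    (Med : (Fin n → ℝ) → Fin n → ℝ) : Prop :=
  ∀ x i, IsWeightedMedian x (W i) (Med x i) ∧
    ∀ m, IsWeightedMedian x (W i) m → |Med x i - x i| ≤ |m - x i|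

/-- `φ` is the solution map of the ODE `ẋ = g(x)`: `φ x0` is the solution starting at `x0`. -/
def IsFlow {n : ℕ} (g : (Fin n → ℝ) → (Fin n → ℝ))
    (φ : (Fin n → ℝ) → ℝ → (Fin n → ℝ)) : Prop :=
  ∀ x, φ x 0 = x ∧ ∀ t : ℝ, HasDerivAt (φ x) (g (φ x t)) t

/-- `order^{≤ r}(x)`: indices whose value is among the `r` largest distinct values of `x`. -/
noncomputable def orderLe {n : ℕ} (x : Fin n → ℝ) (r : ℕ) : Finset (Fin n) :=
  univ.filter (fun i => ((univ.image x).filter (fun v => x i < v)).card < r)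

/-- The set of equilibria of the CTWM dynamics. -/
def Xeq {n : ℕ} (W : Matrix (Fin n) (Fin n) ℝ) : Set (Fin n → ℝ) :=
  {x | ∀ r : ℕ, 1 ≤ r → r ≤ (univ.image x).card → MaxCohesive W (orderLe x r)}

/-- The ω-limit set of a trajectory `φ`. -/
def omegaLimitSet {n : ℕ} (φ : ℝ → (Fin n → ℝ)) : Set (Fin n → ℝ) :=
  {z | ∃ u : ℕ → ℝ, Tendsto u atTop atTop ∧ Tendsto (fun k => φ (u k)) atTop (𝓝 z)}

/-!
At an equilibrium `xs`, the upper level sets of `xs` are maximal cohesive, which says exactly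
that `xs i` is a weighted median of `xs` for the weights of row `i`. If `x` is within `ρ` of
`xs` in the sup norm, the weighted median of `x` closest to `x i` is then within `ρ` of `xs i`:
a median beyond `xs i + ρ` would be beaten by the largest value of `x` below `xs i + ρ`. Hence
`‖Med x - xs‖ ≤ ‖x - xs‖`, and along a trajectory `e^t (x(t) - xs)` has derivative
`e^t (Med x(t) - xs)`, whose norm is bounded by that of the function itself; Grönwall's
inequality then gives `‖x(t) - xs‖ ≤ ‖x(0) - xs‖`.
-/

/-- `orderLe x r` is the set of indices `i` with `valueRank x i < r`. -/
noncomputable def valueRank {n : ℕ} (x : Fin n → ℝ) (i : Fin n) : ℕ :=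
  #((univ.image x).filter (fun v => x i < v))

section valueRank

variable {n : ℕ} (x : Fin n → ℝ)

lemma valueRank_lt_valueRank {i j : Fin n} (h : x i < x j) : valueRank x j < valueRank x i := by
  refine card_lt_card ((ssubset_iff_of_subset fun v hv => ?_).2 ⟨x j, ?_, ?_⟩)
  · simp only [mem_filter] at hv ⊢
    exact ⟨hv.1, h.trans hv.2⟩
  · simp [h]
  · simp

lemma valueRank_le_valueRank_iff {i j : Fin n} : valueRank x j ≤ valueRank x i ↔ x i ≤ x j := by
  refine ⟨fun h => not_lt.1 fun hji => h.not_gt (valueRank_lt_valueRank x hji), fun h => ?_⟩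
  refine card_le_card fun v hv => ?_
  simp only [mem_filter] at hv ⊢
  exact ⟨hv.1, h.trans_lt hv.2⟩

lemma valueRank_lt_card (i : Fin n) : valueRank x i < #(univ.image x) :=
  card_lt_card (filter_ssubset.2 ⟨x i, by simp, lt_irrefl _⟩)

lemma orderLe_valueRank (i : Fin n) :
    orderLe x (valueRank x i) = univ.filter (fun j => x i < x j) := by
  ext j
  simp only [orderLe, mem_filter, mem_univ, true_and]
  exact lt_iff_lt_of_le_iff_le (valueRank_le_valueRank_iff x)

lemma orderLe_valueRank_add_one (i : Fin n) :
    orderLe x (valueRank x i + 1) = univ.filter (fun j => x i ≤ x j) := by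
  ext j
  simp only [orderLe, mem_filter, mem_univ, true_and, Nat.lt_succ_iff]
  exact valueRank_le_valueRank_iff x

end valueRank

lemma isWeightedMedian_of_mem_Xeq {n : ℕ} {W : Matrix (Fin n) (Fin n) ℝ}
    (hW : ∀ i, ∑ j, W i j = 1) {xs : Fin n → ℝ} (hxs : xs ∈ Xeq W) (i : Fin n) :
    IsWeightedMedian xs (W i) (xs i) := by
  refine ⟨⟨i, rfl⟩, ?_, ?_⟩
  · have hcohesive := (hxs (valueRank xs i + 1) (by omega) (valueRank_lt_card xs i)).1 i
    rw [orderLe_valueRank_add_one] at hcohesive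
    have hsplit := sum_filter_add_sum_filter_not univ (fun j => xs j < xs i) (W i)
    simp only [not_lt, hW i] at hsplit
    linarith [hcohesive (by simp)]
  · rw [← orderLe_valueRank]
    rcases Nat.eq_zero_or_pos (valueRank xs i) with h0 | hpos
    · simp [h0, orderLe]
    · exact not_lt.1 ((hxs _ hpos (valueRank_lt_card xs i).le).2 i (by simp [orderLe_valueRank]))

def IsClosestWeightedMedian {n : ℕ} (x w : Fin n → ℝ) (a m : ℝ) : Prop :=
  IsWeightedMedian x w m ∧ ∀ m', IsWeightedMedian x w m' → |m - a| ≤ |m' - a|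

section WeightedMedian

variable {n : ℕ} {x w : Fin n → ℝ} {m : ℝ}

lemma isWeightedMedian_neg_iff : IsWeightedMedian (-x) w (-m) ↔ IsWeightedMedian x w m := by
  simp only [IsWeightedMedian, Pi.neg_apply, neg_inj, neg_lt_neg_iff]
  tauto

lemma IsClosestWeightedMedian.neg {a : ℝ} (h : IsClosestWeightedMedian x w a m) :
    IsClosestWeightedMedian (-x) w (-a) (-m) := by
  refine ⟨isWeightedMedian_neg_iff.2 h.1, fun m' hm' => ?_⟩
  rw [← neg_neg m', isWeightedMedian_neg_iff] at hm'
  calc |-m - -a| = |m - a| := by rw [← abs_neg]; ring_nf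
    _ ≤ |-m' - a| := h.2 _ hm'
    _ = |m' - -a| := by rw [← abs_neg]; ring_nf

variable {i : Fin n}

lemma IsClosestWeightedMedian.le_of_sum_gt_le_half {c : ℝ} (hw : ∀ j, 0 ≤ w j)
    (hm : IsClosestWeightedMedian x w (x i) m) (hic : x i ≤ c)
    (hc : ∑ j ∈ univ.filter (fun j => c < x j), w j ≤ 1 / 2) : m ≤ c := by
  by_contra! hcm
  obtain ⟨k, hk, hkmax⟩ := exists_max_image (univ.filter fun j => x j ≤ c) x ⟨i, by simpa⟩
  simp only [mem_filter, mem_univ, true_and] at hk hkmax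
  -- `x k` is the largest value of `x` not exceeding `c`: a median strictly closer to `x i`.
  have hmed : IsWeightedMedian x w (x k) := by
    refine ⟨⟨k, rfl⟩, (sum_le_sum_of_subset_of_nonneg ?_ fun j _ _ => hw j).trans hm.1.2.1,
      (sum_le_sum_of_subset_of_nonneg ?_ fun j _ _ => hw j).trans hc⟩
    · intro j
      simp only [mem_filter, mem_univ, true_and]
      intro hj
      linarith
    · intro j
      simp only [mem_filter, mem_univ, true_and]
      intro hj
      by_contra! hjc
      exact (hkmax j hjc).not_gt hj
  have hcloser := hm.2 _ hmed
  rw [abs_of_pos (by linarith), abs_of_nonneg (sub_nonneg.2 (hkmax i hic))] at hcloser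
  linarith

lemma IsClosestWeightedMedian.sub_le {y : Fin n → ℝ} {ρ : ℝ} (hw : ∀ j, 0 ≤ w j)
    (hm : IsClosestWeightedMedian x w (x i) m)
    (hy : ∑ j ∈ univ.filter (fun j => y i < y j), w j ≤ 1 / 2) (hxy : ∀ j, x j - y j ≤ ρ) :
    m - y i ≤ ρ := by
  have hsub : univ.filter (fun j => y i + ρ < x j) ⊆ univ.filter (fun j => y i < y j) := by
    intro j
    simp only [mem_filter, mem_univ, true_and]
    intro hj
    linarith [hxy j]
  have := hm.le_of_sum_gt_le_half hw (by linarith [hxy i])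
    ((sum_le_sum_of_subset_of_nonneg hsub fun j _ _ => hw j).trans hy)
  linarith

lemma IsClosestWeightedMedian.abs_sub_le {y : Fin n → ℝ} {ρ : ℝ} (hw : ∀ j, 0 ≤ w j)
    (hm : IsClosestWeightedMedian x w (x i) m) (hy : IsWeightedMedian y w (y i))
    (hxy : ∀ j, |x j - y j| ≤ ρ) : |m - y i| ≤ ρ := by
  refine abs_le.2 ⟨?_, hm.sub_le hw hy.2.2 fun j => (abs_le.1 (hxy j)).2⟩
  have := hm.neg.sub_le hw (y := -y) (isWeightedMedian_neg_iff.2 hy).2.2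
    fun j => by simp only [Pi.neg_apply]; linarith [(abs_le.1 (hxy j)).1]
  simp only [Pi.neg_apply] at this
  linarith

end WeightedMedian

lemma norm_med_sub_le_of_mem_Xeq {n : ℕ} {W : Matrix (Fin n) (Fin n) ℝ} (hW : RowStochastic W)
    {Med : (Fin n → ℝ) → Fin n → ℝ} (hMed : IsMedSelection W Med) {xs : Fin n → ℝ}
    (hxs : xs ∈ Xeq W) (x : Fin n → ℝ) : ‖Med x - xs‖ ≤ ‖x - xs‖ := by
  refine (pi_norm_le_iff_of_nonneg (norm_nonneg _)).2 fun i => ?_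
  simp only [Pi.sub_apply, Real.norm_eq_abs]
  exact IsClosestWeightedMedian.abs_sub_le (hW.1 i) (hMed x i)
    (isWeightedMedian_of_mem_Xeq hW.2 hxs i) fun j => by
      simpa only [Pi.sub_apply, Real.norm_eq_abs] using norm_le_pi_norm (x - xs) j

lemma norm_sub_le_of_hasDerivAt_sub_self {E : Type*} [NormedAddCommGroup E] [NormedSpace ℝ E]
    {g : E → E} {c : E} {u : ℝ → E} (hu : ∀ t, HasDerivAt u (g (u t) - u t) t)
    (hg : ∀ t, ‖g (u t) - c‖ ≤ ‖u t - c‖) {t : ℝ} (ht : 0 ≤ t) : ‖u t - c‖ ≤ ‖u 0 - c‖ := by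
  have hv : ∀ s, HasDerivAt (fun s => Real.exp s • (u s - c)) (Real.exp s • (g (u s) - c)) s :=
    fun s => ((Real.hasDerivAt_exp s).smul ((hu s).sub_const c)).congr_deriv (by
      rw [← smul_add]; congr 1; abel)
  have hbound := norm_le_gronwallBound_of_norm_deriv_right_le
    (δ := ‖u 0 - c‖) (K := 1) (ε := 0) (a := 0) (b := t)
    (fun s _ => (hv s).continuousAt.continuousWithinAt) (fun s _ => (hv s).hasDerivWithinAt)
    (by simp) (fun s _ => by
      simp only [norm_smul, Real.norm_eq_abs, abs_of_pos (Real.exp_pos s), one_mul, add_zero]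
      exact mul_le_mul_of_nonneg_left (hg s) (Real.exp_pos s).le) t ⟨ht, le_rfl⟩
  rw [gronwallBound_ε0, norm_smul, Real.norm_eq_abs, abs_of_pos (Real.exp_pos t), one_mul,
    sub_zero, mul_comm] at hbound
  exact le_of_mul_le_mul_right hbound (Real.exp_pos t)

/-- Every equilibrium of the CTWM dynamics is Lyapunov stable: trajectories starting
within `ε` (in the sup norm) of the equilibrium stay within `ε` for all times. -/
theorem ctwm_equilibria_stable {n : ℕ}
    (W : Matrix (Fin n) (Fin n) ℝ) (hW : RowStochastic W)
    (Med : (Fin n → ℝ) → Fin n → ℝ) (hMed : IsMedSelection W Med)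
    (φ : (Fin n → ℝ) → ℝ → (Fin n → ℝ))
    (hφ : IsFlow (fun x => Med x - x) φ)
    (xs : Fin n → ℝ) (hxs : xs ∈ Xeq W) :
    ∀ ε > (0:ℝ), ∀ x0 : Fin n → ℝ, ‖x0 - xs‖ ≤ ε →
      ∀ t : ℝ, 0 ≤ t → ‖φ x0 t - xs‖ ≤ ε := by
  intro ε _ x0 hx0 t ht
  obtain ⟨hinit, hderiv⟩ := hφ x0
  calc ‖φ x0 t - xs‖ ≤ ‖φ x0 0 - xs‖ := norm_sub_le_of_hasDerivAt_sub_self hderiv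
        (fun _ => norm_med_sub_le_of_mem_Xeq hW hMed hxs _) ht
    _ = ‖x0 - xs‖ := by rw [hinit]
    _ ≤ ε := hx0
end

section
/- Upward behaviour from upward-repulsive states: suppose x0 ∈ ℝ^n is in the upward-repulsive class, i.e., there exist a cohesive set C and i* ∈ C with {i*} = argmin_{j∈C} x0_j and Σ_{j∈C, j≠i*} w_{i*j} > 1/2. Then there exist ε > 0 and a time τ ≥ 0 such that φ(τ,x0) ∈ X^a := {x ∈ ℝ^n : x_i ≥ min_{j∈C} x0_j + ε for all i ∈ C}, where X^a is positively invariant for the CTWM dynamics and is at positive distance from x0. -/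
/-! Cohesiveness of `C` keeps every weighted median of a member of `C` at or above `min_C x`, so
`min_C x` is nondecreasing along trajectories and each set `{x : c + ε ≤ x i for i ∈ C}` is
positively invariant. In an upward-repulsive state the weight above `1 / 2` on `C \ {i⋆}` lifts
`Med_{i⋆}(x0)` above `x0 i⋆ = min_C x0`, so after a short time `τ` all of `C` lies strictly above
`x0 i⋆`; take `ε = min_C φ(τ, x0) - x0 i⋆`. -/

open Finset Filter Topology

/-- The set `{x : xᵢ ≥ c + ε for all i ∈ C}`. -/
def upperInvSet {n : ℕ} (C : Finset (Fin n)) (c ε : ℝ) : Set (Fin n → ℝ) :=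
  {x | ∀ i ∈ C, c + ε ≤ x i}

section WeightedMedian

variable {n : ℕ} {x w : Fin n → ℝ}

theorem sum_filter_lt_le_half (hw0 : ∀ j, 0 ≤ w j) (hw1 : ∑ j, w j = 1)
    {S : Finset (Fin n)} (hS : 1 / 2 ≤ ∑ j ∈ S, w j) {a : ℝ} (ha : ∀ j ∈ S, a ≤ x j) :
    ∑ j ∈ univ.filter (fun j => x j < a), w j ≤ 1 / 2 := by
  have hdisj : Disjoint (univ.filter (fun j => x j < a)) S :=
    disjoint_left.2 fun j hj hjS => (mem_filter.1 hj).2.not_ge (ha j hjS)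
  have hle := sum_le_sum_of_subset_of_nonneg (subset_univ (univ.filter (fun j => x j < a) ∪ S))
    fun j _ _ => hw0 j
  rw [sum_union hdisj, hw1] at hle
  linarith

theorem IsWeightedMedian.exists_le_of_half_lt {m : ℝ} (hm : IsWeightedMedian x w m)
    (hw0 : ∀ j, 0 ≤ w j) {S : Finset (Fin n)} (hS : 1 / 2 < ∑ j ∈ S, w j) :
    ∃ j ∈ S, x j ≤ m := by
  by_contra! h
  have hsub : S ⊆ univ.filter (fun j => m < x j) := fun j hj => by simpa using h j hj
  linarith [sum_le_sum_of_subset_of_nonneg hsub fun j _ _ => hw0 j, hm.2.2]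

end WeightedMedian

/-- Cohesiveness leaves weight at most `1 / 2` strictly below `a := C.inf' x`; so if the selected
median were below `a`, then `a` would be a median closer to `x i`. -/
theorem inf'_le_med {n : ℕ} {W : Matrix (Fin n) (Fin n) ℝ} (hW : RowStochastic W)
    {Med : (Fin n → ℝ) → Fin n → ℝ} (hMed : IsMedSelection W Med)
    {C : Finset (Fin n)} (hC : Cohesive W C) {i : Fin n} (hi : i ∈ C) (x : Fin n → ℝ) :
    C.inf' ⟨i, hi⟩ x ≤ Med x i := by
  set a := C.inf' ⟨i, hi⟩ x
  by_contra! hlt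
  obtain ⟨hmed, hclosest⟩ := hMed x i
  have hsub : univ.filter (fun j => a < x j) ⊆ univ.filter (fun j => Med x i < x j) :=
    fun j hj => by simp only [mem_filter, mem_univ, true_and] at hj ⊢; exact hlt.trans hj
  have ha : IsWeightedMedian x (W i) a :=
    ⟨(exists_mem_eq_inf' ⟨i, hi⟩ x).imp fun _ hj => hj.2.symm,
      sum_filter_lt_le_half (hW.1 i) (hW.2 i) (hC i hi) fun _ hj => inf'_le x hj,
      (sum_le_sum_of_subset_of_nonneg hsub fun j _ _ => hW.1 i j).trans hmed.2.2⟩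
  have hax : a ≤ x i := inf'_le x hi
  have hcloser := hclosest a ha
  rw [abs_of_nonpos (by linarith), abs_of_nonpos (by linarith)] at hcloser
  linarith

/-- Some index attains the minimum at times accumulating at `t` from the right; along those times
the slope of the minimum is that of the coordinate, so the lower right Dini derivative of the
minimum is nonnegative. -/
theorem Finset.Nonempty.monotone_inf'_of_hasDerivAt {ι : Type*} {s : Finset ι} (hs : s.Nonempty)
    {g g' : ι → ℝ → ℝ} (hg : ∀ i ∈ s, ∀ t, HasDerivAt (g i) (g' i t) t)
    (hg' : ∀ t, ∀ i ∈ s, g i t = s.inf' hs (fun j => g j t) → 0 ≤ g' i t) :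
    Monotone fun t => s.inf' hs fun i => g i t := by
  set m : ℝ → ℝ := fun t => s.inf' hs fun i => g i t
  have hcont : ∀ i ∈ s, Continuous (g i) := fun i hi =>
    continuous_iff_continuousAt.2 fun t => (hg i hi t).continuousAt
  have hm : Continuous m := Continuous.finset_inf'_apply hs hcont
  have hslope : ∀ t, ∀ r, 0 < r → ∃ᶠ z in 𝓝[>] t, slope (fun z => -m z) t z < r := by
    intro t r hr
    obtain ⟨i, hi, hfreq⟩ : ∃ i ∈ s, ∃ᶠ z in 𝓝[>] t, g i z = m z :=
      s.frequently_exists.1 (Frequently.of_forall fun z =>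
        (exists_mem_eq_inf' hs fun j => g j z).imp fun _ hj => ⟨hj.1, hj.2.symm⟩)
    have hit : g i t = m t := by
      have hclosed : IsClosed {z | g i z = m z} := isClosed_eq (hcont i hi) hm
      exact hclosed.closure_subset
        (mem_closure_iff_frequently.2 (hfreq.filter_mono nhdsWithin_le_nhds))
    have hev : ∀ᶠ z in 𝓝[>] t, slope (fun z => -g i z) t z < r :=
      (hg i hi t).neg.hasDerivWithinAt.limsup_slope_le' (lt_irrefl t)
        (by linarith [hg' t i hi hit])
    refine (hfreq.and_eventually hev).mono fun z ⟨hz, hzr⟩ => ?_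
    simpa only [slope_def_field, hz, hit] using hzr
  intro a b hab
  have := image_le_of_liminf_slope_right_le_deriv_boundary (f := fun z => -m z)
    (B := fun _ => -m a) (B' := fun _ => 0) hm.neg.continuousOn le_rfl continuousOn_const
    (fun _ _ => hasDerivWithinAt_const _ _ _) (fun t _ r hr => hslope t r hr) ⟨hab, le_rfl⟩
  exact neg_le_neg_iff.1 this

theorem HasDerivAt.eventually_nhdsGT_lt {f : ℝ → ℝ} {f' x : ℝ} (hf : HasDerivAt f f' x)
    (hf' : 0 < f') : ∀ᶠ z in 𝓝[>] x, f x < f z := by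
  filter_upwards [(hasDerivAt_iff_tendsto_slope_left_right.1 hf).2.eventually_const_lt hf',
    self_mem_nhdsWithin] with z hz hxz
  exact (slope_pos_iff hxz).1 hz

section Flow

variable {n : ℕ} {W : Matrix (Fin n) (Fin n) ℝ} {Med : (Fin n → ℝ) → Fin n → ℝ}
  {φ : (Fin n → ℝ) → ℝ → (Fin n → ℝ)}

theorem IsFlow.hasDerivAt_apply {g : (Fin n → ℝ) → (Fin n → ℝ)} (hφ : IsFlow g φ)
    (y : Fin n → ℝ) (j : Fin n) (t : ℝ) : HasDerivAt (fun s => φ y s j) (g (φ y t) j) t :=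
  hasDerivAt_pi.1 ((hφ y).2 t) j

theorem monotone_inf'_flow (hW : RowStochastic W) (hMed : IsMedSelection W Med)
    (hφ : IsFlow (fun x => Med x - x) φ) {C : Finset (Fin n)} (hC : Cohesive W C)
    (hne : C.Nonempty) (y : Fin n → ℝ) : Monotone fun t => C.inf' hne (φ y t) :=
  hne.monotone_inf'_of_hasDerivAt (fun j _ t => hφ.hasDerivAt_apply y j t)
    fun t j hj hjt => by
      have := inf'_le_med hW hMed hC hj (φ y t)
      simp only [Pi.sub_apply]
      linarith

theorem flow_mem_upperInvSet (hW : RowStochastic W) (hMed : IsMedSelection W Med)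
    (hφ : IsFlow (fun x => Med x - x) φ) {C : Finset (Fin n)} (hC : Cohesive W C) {c ε : ℝ}
    {y : Fin n → ℝ} (hy : y ∈ upperInvSet C c ε) {t : ℝ} (ht : 0 ≤ t) :
    φ y t ∈ upperInvSet C c ε := fun i hi => calc
  c + ε ≤ C.inf' ⟨i, hi⟩ (φ y 0) := le_inf' _ _ fun j hj => by rw [(hφ y).1]; exact hy j hj
  _ ≤ C.inf' ⟨i, hi⟩ (φ y t) := monotone_inf'_flow hW hMed hφ hC ⟨i, hi⟩ y ht
  _ ≤ φ y t i := inf'_le _ hi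

/-- On an upward-repulsive state the median of `i⋆` lies above `x0 i⋆`, so `i⋆` starts
moving up while the other members of `C` are still strictly above `x0 i⋆`. -/
theorem eventually_forall_lt_flow (hW : RowStochastic W) (hMed : IsMedSelection W Med)
    (hφ : IsFlow (fun x => Med x - x) φ) {x0 : Fin n → ℝ} {C : Finset (Fin n)}
    {istar : Fin n} (hmin : ∀ j ∈ C, j ≠ istar → x0 istar < x0 j)
    (hw : 1 / 2 < ∑ j ∈ C.erase istar, W istar j) :
    ∀ᶠ τ in 𝓝[>] 0, ∀ j ∈ C, x0 istar < φ x0 τ j := by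
  have h0 : φ x0 0 = x0 := (hφ x0).1
  obtain ⟨k, hk, hkmed⟩ := ((hMed x0 istar).1).exists_le_of_half_lt (hW.1 istar) hw
  have hk' := mem_erase.1 hk
  have hstar : ∀ᶠ τ in 𝓝[>] 0, x0 istar < φ x0 τ istar := by
    have hderiv := hφ.hasDerivAt_apply x0 istar 0
    simp only [h0, Pi.sub_apply] at hderiv
    simpa only [h0] using hderiv.eventually_nhdsGT_lt (by linarith [hmin k hk'.2 hk'.1])
  refine C.eventually_all.2 fun j hj => ?_
  rcases eq_or_ne j istar with rfl | hne
  · exact hstar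
  · have hcont := (hφ.hasDerivAt_apply x0 j 0).continuousAt.tendsto.mono_left
      (nhdsWithin_le_nhds (s := Set.Ioi 0))
    rw [h0] at hcont
    exact hcont.eventually_const_lt (hmin j hj hne)

end Flow

theorem le_infDist_upperInvSet {n : ℕ} {C : Finset (Fin n)} {c ε : ℝ} {x : Fin n → ℝ}
    {i : Fin n} (hi : i ∈ C) (hx : x i ≤ c) : ε ≤ Metric.infDist x (upperInvSet C c ε) :=
  (Metric.le_infDist ⟨fun _ => c + ε, show (fun _ => c + ε) ∈ upperInvSet C c ε from
    fun _ _ => le_rfl⟩).2 fun y hy => calc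
    ε ≤ y i - x i := by linarith [hy i hi]
    _ ≤ dist (x i) (y i) := by rw [Real.dist_eq, abs_sub_comm]; exact le_abs_self _
    _ ≤ dist x y := dist_le_pi_dist x y i

/-- Upward behaviour from upward-repulsive states: the trajectory enters, within finite
time, a positively invariant set lying at positive distance from the initial state, in
which all opinions of the cohesive set `C` exceed the initial minimum over `C` by `ε`. -/
theorem upward_repulsive_behaviour {n : ℕ}
    (W : Matrix (Fin n) (Fin n) ℝ) (hW : RowStochastic W)
    (Med : (Fin n → ℝ) → Fin n → ℝ) (hMed : IsMedSelection W Med)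
    (φ : (Fin n → ℝ) → ℝ → (Fin n → ℝ))
    (hφ : IsFlow (fun x => Med x - x) φ)
    (x0 : Fin n → ℝ) (C : Finset (Fin n)) (hC : Cohesive W C)
    (istar : Fin n) (histar : istar ∈ C)
    (hmin : ∀ j ∈ C, j ≠ istar → x0 istar < x0 j)
    (hw : 1 / 2 < ∑ j ∈ C.erase istar, W istar j) :
    ∃ ε > (0:ℝ), ∃ τ ≥ (0:ℝ),
      φ x0 τ ∈ upperInvSet C (C.inf' ⟨istar, histar⟩ x0) ε ∧
      (∀ y ∈ upperInvSet C (C.inf' ⟨istar, histar⟩ x0) ε, ∀ t : ℝ, 0 ≤ t →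
        φ y t ∈ upperInvSet C (C.inf' ⟨istar, histar⟩ x0) ε) ∧
      0 < Metric.infDist x0 (upperInvSet C (C.inf' ⟨istar, histar⟩ x0) ε) := by
  have hne : C.Nonempty := ⟨istar, histar⟩
  have hc : C.inf' hne x0 = x0 istar :=
    le_antisymm (inf'_le _ histar) (le_inf' _ _ fun j hj =>
      (eq_or_ne j istar).elim (fun h => h ▸ le_rfl) fun h => (hmin j hj h).le)
  obtain ⟨τ, hτ, hτpos⟩ :=
    ((eventually_forall_lt_flow hW hMed hφ hmin hw).and self_mem_nhdsWithin).exists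
  set ε := C.inf' hne (φ x0 τ) - x0 istar
  have hε : 0 < ε := sub_pos.2 ((lt_inf'_iff hne).2 hτ)
  refine ⟨ε, hε, τ, le_of_lt hτpos, fun i hi => ?_,
    fun y hy t ht => flow_mem_upperInvSet hW hMed hφ hC hy ht,
    hε.trans_le (le_infDist_upperInvSet histar hc.ge)⟩
  have := inf'_le (φ x0 τ) hi
  rw [hc]
  linarith
end

section
/- Pinning controllability of the CTWM dynamics: consider the pinned dynamics ẋ_i(t) = γ_i u + (1−γ_i)·Med_i(x(t);W) − x_i(t) for i ∈ V, where u ∈ ℝ is a fixed external opinion, γ_i ∈ (0,1] for every pinned agent i ∈ V_p, and γ_i = 0 for every unpinned agent i ∈ V\V_p. Then every solution converges to the consensus vector u·1_n for every initial condition x(0) ∈ ℝ^n if and only if every cohesive set of G(W) contains at least one agent of V_p. -/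
open Finset Filter Topology

/-!
Every agent moves toward `γᵢ u + (1 - γᵢ) Medᵢ`, and a weighted median is one of the current
opinions, so the sup-distance of the opinions to `u` never increases. For an agent of a cohesive
set `M`, the weighted median closest to its own opinion even lies between the extreme opinions on
`M`; hence an unpinned cohesive set that starts at a common value `c ≠ u` stays at `c`.

Conversely, suppose the sup-distance tends to `E > 0`. A pinned agent is damped by the factor
`1 - γᵢ < 1`, so its deviation eventually stays below `E`. The agents whose deviation keeps
returning to `E` form a cohesive set: such an agent infinitely often sees a median above the level
that all other agents eventually stay below, so those others carry weight at most `1/2` in its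
row. This cohesive set contains no pinned agent, hence is empty; applying the same argument to
`-x` puts all deviations eventually below `E`, a contradiction.
-/

theorem antitone_sup'_of_hasDerivAt {ι : Type*} {S : Finset ι} (hS : S.Nonempty)
    {f f' : ι → ℝ → ℝ} (hf : ∀ i ∈ S, ∀ t, HasDerivAt (f i) (f' i t) t)
    (hmax : ∀ i ∈ S, ∀ t, f i t = S.sup' hS (f · t) → f' i t ≤ 0) :
    Antitone fun t => S.sup' hS (f · t) := by
  set F := fun t => S.sup' hS (f · t)
  have hFc : Continuous F :=
    Continuous.finset_sup'_apply hS fun i hi => continuous_iff_continuousAt.2 fun t =>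
      (hf i hi t).continuousAt
  intro a b hab
  refine image_le_of_liminf_slope_right_le_deriv_boundary (B := fun _ => F a) (B' := 0)
    hFc.continuousOn le_rfl continuousOn_const (fun x _ => hasDerivWithinAt_const x _ _)
    (fun x _ r hr => ?_) (Set.right_mem_Icc.2 hab)
  have hactive : ∀ᶠ z in 𝓝 x, ∀ i ∈ S, f i z = F z → f i x = F x := by
    refine (eventually_all_finset S).2 fun i hi => ?_
    by_cases hix : f i x = F x
    · exact Eventually.of_forall fun _ _ => hix
    have hlt : f i x < F x := (le_sup' (f · x) hi).lt_of_ne hix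
    filter_upwards [(hf i hi x).continuousAt.eventually_lt hFc.continuousAt hlt]
      with z hz hiz using absurd hiz hz.ne
  have hslope : ∀ᶠ z in 𝓝[>] x, ∀ i ∈ S, f i x = F x → slope (f i) x z < r := by
    refine (eventually_all_finset S).2 fun i hi => ?_
    by_cases hix : f i x = F x
    · have hlim := (hasDerivAt_iff_tendsto_slope.1 (hf i hi x)).mono_left (nhdsGT_le_nhdsNE x)
      exact (hlim.eventually_lt_const ((hmax i hi x hix).trans_lt hr)).mono fun _ h _ => h
    · exact Eventually.of_forall fun _ h => absurd h hix
  refine ((hactive.filter_mono nhdsWithin_le_nhds).and hslope).frequently.mono ?_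
  rintro z ⟨hzact, hzslope⟩
  obtain ⟨i, hi, hiz⟩ := S.exists_mem_eq_sup' hS (f · z)
  have hix := hzact i hi hiz.symm
  calc slope F x z = slope (f i) x z := by
        simp only [slope_def_field, F] at hiz hix ⊢; rw [hiz, hix]
    _ < r := hzslope i hi hix

theorem antitone_sup'_abs_of_hasDerivAt {ι : Type*} {S : Finset ι} (hS : S.Nonempty)
    {y v : ι → ℝ → ℝ} (hy : ∀ i ∈ S, ∀ t, HasDerivAt (y i) (v i t - y i t) t)
    (hv : ∀ i ∈ S, ∀ t, |v i t| ≤ S.sup' hS (fun j => |y j t|)) :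
    Antitone fun t => S.sup' hS (fun j => |y j t|) := by
  have hS' : (S ×ˢ {1, -1} : Finset (ι × ℝ)).Nonempty := hS.product (insert_nonempty _ _)
  have hsup : ∀ t, (S ×ˢ {1, -1}).sup' hS' (fun p => p.2 * y p.1 t)
      = S.sup' hS (fun j => |y j t|) := fun t => by
    simp [sup'_product_left, abs_eq_max_neg]
  simp only [← hsup]
  refine antitone_sup'_of_hasDerivAt hS' (f' := fun p t => p.2 * (v p.1 t - y p.1 t))
    (fun p hp t => (hy p.1 (mem_product.1 hp).1 t).const_mul p.2) ?_
  rintro ⟨i, s⟩ hp t hmax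
  rw [hsup] at hmax
  simp only [mem_product, mem_insert, mem_singleton] at hp hmax ⊢
  obtain ⟨hi, rfl | rfl⟩ := hp
  · linarith [hv i hi t, le_abs_self (v i t)]
  · linarith [hv i hi t, neg_abs_le (v i t)]

theorem limsup_le_of_hasDerivAt_sub {f b : ℝ → ℝ} {B : ℝ}
    (hf : ∀ t, HasDerivAt f (b t - f t) t) (hb : ∀ᶠ t in atTop, b t ≤ B)
    (hcob : IsCoboundedUnder (· ≤ ·) atTop f) : limsup f atTop ≤ B := by
  obtain ⟨T, hT⟩ := hb.exists_forall_of_atTop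
  have hg : ∀ t, HasDerivAt (fun s => (f s - B) * Real.exp s) ((b t - B) * Real.exp t) t :=
    fun t => (((hf t).sub_const B).mul (Real.hasDerivAt_exp t)).congr_deriv (by ring)
  have hanti : AntitoneOn (fun s => (f s - B) * Real.exp s) (Set.Ici T) :=
    antitoneOn_of_deriv_nonpos (convex_Ici T) (fun t _ => (hg t).continuousAt.continuousWithinAt)
      (fun t _ => (hg t).differentiableAt.differentiableWithinAt) fun t ht => by
        rw [(hg t).deriv]
        rw [interior_Ici] at ht
        exact mul_nonpos_of_nonpos_of_nonneg (sub_nonpos.2 (hT t ht.le)) (Real.exp_pos t).le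
  have hdecay : Tendsto (fun t => B + (f T - B) * Real.exp T * Real.exp (-t)) atTop (𝓝 B) := by
    simpa using
      (Real.tendsto_exp_neg_atTop_nhds_zero.const_mul ((f T - B) * Real.exp T)).const_add B
  have hle : ∀ᶠ t in atTop, f t ≤ B + (f T - B) * Real.exp T * Real.exp (-t) := by
    filter_upwards [eventually_ge_atTop T] with t ht
    have h := mul_le_mul_of_nonneg_right (hanti Set.self_mem_Ici ht ht) (Real.exp_pos (-t)).le
    rw [mul_assoc _ (Real.exp t), ← Real.exp_add, add_neg_cancel, Real.exp_zero, mul_one] at h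
    linarith
  calc limsup f atTop ≤ limsup (fun t => B + (f T - B) * Real.exp T * Real.exp (-t)) atTop :=
        limsup_le_limsup hle hcob hdecay.isBoundedUnder_le
    _ = B := hdecay.limsup_eq

theorem sum_compl_le_half {ι : Type*} [Fintype ι] [DecidableEq ι] {w : ι → ℝ}
    (hsum : ∑ j, w j = 1) {M : Finset ι} (hM : 1 / 2 ≤ ∑ j ∈ M, w j) :
    ∑ j ∈ Mᶜ, w j ≤ 1 / 2 := by
  linarith [sum_add_sum_compl M w]

section WeightedMedian

variable {n : ℕ} {x w : Fin n → ℝ} {m : ℝ}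

theorem IsWeightedMedian.neg (h : IsWeightedMedian x w m) :
    IsWeightedMedian (fun j => -x j) w (-m) := by
  obtain ⟨⟨k, hk⟩, hlow, hup⟩ := h
  refine ⟨⟨k, congrArg Neg.neg hk⟩, ?_, ?_⟩ <;> simpa only [neg_lt_neg_iff]

theorem IsWeightedMedian.sub_const (h : IsWeightedMedian x w m) (c : ℝ) :
    IsWeightedMedian (fun j => x j - c) w (m - c) := by
  obtain ⟨⟨k, hk⟩, hlow, hup⟩ := h
  refine ⟨⟨k, congrArg (· - c) hk⟩, ?_, ?_⟩ <;> simpa only [sub_lt_sub_iff_right]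

/-- If the median `m` closest to `x i` lay below the least value `v` of `x` on a set `M ∋ i`
of weight at least `1/2`, then `v` would be a median closer to `x i`. -/
theorem IsWeightedMedian.ge_of_closest (hw : ∀ j, 0 ≤ w j) (hsum : ∑ j, w j = 1)
    (hm : IsWeightedMedian x w m)
    {i : Fin n} (hclosest : ∀ m', IsWeightedMedian x w m' → |m - x i| ≤ |m' - x i|)
    {M : Finset (Fin n)} (hMw : 1 / 2 ≤ ∑ j ∈ M, w j) (hi : i ∈ M)
    {v : ℝ} (hv : ∃ k, x k = v) (hvM : ∀ j ∈ M, v ≤ x j) : v ≤ m := by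
  by_contra! hmv
  have hmed : IsWeightedMedian x w v := by
    refine ⟨hv, ?_, ?_⟩
    · refine (sum_le_sum_of_subset_of_nonneg (fun j hj => ?_) fun j _ _ => hw j).trans
        (sum_compl_le_half hsum hMw)
      exact mem_compl.2 fun hjM => (mem_filter.1 hj).2.not_ge (hvM j hjM)
    · refine (sum_le_sum_of_subset_of_nonneg (fun j hj => ?_) fun j _ _ => hw j).trans hm.2.2
      simp only [mem_filter, mem_univ, true_and] at hj ⊢
      exact hmv.trans hj
  have := hclosest v hmed
  rw [abs_of_nonpos (by linarith [hvM i hi]), abs_of_nonpos (by linarith [hvM i hi])] at this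
  linarith

theorem IsWeightedMedian.le_of_closest (hw : ∀ j, 0 ≤ w j) (hsum : ∑ j, w j = 1)
    (hm : IsWeightedMedian x w m)
    {i : Fin n} (hclosest : ∀ m', IsWeightedMedian x w m' → |m - x i| ≤ |m' - x i|)
    {M : Finset (Fin n)} (hMw : 1 / 2 ≤ ∑ j ∈ M, w j) (hi : i ∈ M)
    {v : ℝ} (hv : ∃ k, x k = v) (hvM : ∀ j ∈ M, x j ≤ v) : m ≤ v := by
  have hclosest' :
      ∀ m', IsWeightedMedian (fun j => -x j) w m' → |-m - -x i| ≤ |m' - -x i| := by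
    intro m' hm'
    rw [show -m - -x i = -(m - x i) by ring, abs_neg, show m' - -x i = -(-m' - x i) by ring,
      abs_neg]
    exact hclosest (-m') (by simpa using hm'.neg)
  have := hm.neg.ge_of_closest hw hsum hclosest' hMw hi (v := -v)
    (let ⟨k, hk⟩ := hv; ⟨k, congrArg Neg.neg hk⟩) (fun j hj => neg_le_neg (hvM j hj))
  linarith

end WeightedMedian

theorem abs_med_sub_le_sup' {n : ℕ} {W : Matrix (Fin n) (Fin n) ℝ} (hW : RowStochastic W)
    {Med : (Fin n → ℝ) → Fin n → ℝ} (hMed : IsMedSelection W Med)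
    {M : Finset (Fin n)} (hM : M.Nonempty) (hcoh : Cohesive W M) (x : Fin n → ℝ)
    {i : Fin n} (hi : i ∈ M) (c : ℝ) :
    |Med x i - c| ≤ M.sup' hM (fun j => |x j - c|) := by
  obtain ⟨hmed, hclosest⟩ := hMed x i
  obtain ⟨k, hk, hkmin⟩ := M.exists_mem_eq_inf' hM x
  obtain ⟨k', hk', hkmax⟩ := M.exists_mem_eq_sup' hM x
  have hlo : x k ≤ Med x i := hmed.ge_of_closest (hW.1 i) (hW.2 i) hclosest (hcoh i hi) hi
    ⟨k, rfl⟩ fun j hj => hkmin ▸ inf'_le x hj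
  have hhi : Med x i ≤ x k' := hmed.le_of_closest (hW.1 i) (hW.2 i) hclosest (hcoh i hi) hi
    ⟨k', rfl⟩ fun j hj => hkmax ▸ le_sup' x hj
  have hk_le := le_sup' (fun j => |x j - c|) hk
  have hk'_le := le_sup' (fun j => |x j - c|) hk'
  rw [abs_le]
  constructor
  · linarith [neg_abs_le (x k - c)]
  · linarith [le_abs_self (x k' - c)]

theorem flow_apply_eq_of_cohesive_unpinned {n : ℕ} {W : Matrix (Fin n) (Fin n) ℝ}
    (hW : RowStochastic W) {Med : (Fin n → ℝ) → Fin n → ℝ} (hMed : IsMedSelection W Med)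
    {γ : Fin n → ℝ} {u : ℝ} {φ : (Fin n → ℝ) → ℝ → (Fin n → ℝ)}
    (hφ : IsFlow (fun x i => γ i * u + (1 - γ i) * Med x i - x i) φ)
    {M : Finset (Fin n)} (hM : M.Nonempty) (hcoh : Cohesive W M) (hγM : ∀ i ∈ M, γ i = 0)
    {x0 : Fin n → ℝ} {c : ℝ} (hx0 : ∀ i ∈ M, x0 i = c) {t : ℝ} (ht : 0 ≤ t)
    {i : Fin n} (hi : i ∈ M) : φ x0 t i = c := by
  have hanti : Antitone fun t => M.sup' hM (fun j => |φ x0 t j - c|) :=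
    antitone_sup'_abs_of_hasDerivAt hM (v := fun j t => Med (φ x0 t) j - c)
      (fun j hj t => ((hasDerivAt_pi.1 ((hφ x0).2 t) j).sub_const c).congr_deriv
        (by simp [hγM j hj]))
      (fun j hj t => abs_med_sub_le_sup' hW hMed hM hcoh _ hj c)
  have h0 : M.sup' hM (fun j => |φ x0 0 j - c|) ≤ 0 :=
    sup'_le hM _ fun j hj => by simp [(hφ x0).1, hx0 j hj]
  have := (le_sup' (fun j => |φ x0 t j - c|) hi).trans ((hanti ht).trans h0)
  exact sub_eq_zero.1 (abs_nonpos_iff.1 this)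

section ErrorDynamics

-- `e i t` stands for the deviation `xᵢ(t) - u` of agent `i` from the target and `d i t` for
-- the deviation `Medᵢ(x(t); W) - u` of its median.
variable {n : ℕ} {W : Matrix (Fin n) (Fin n) ℝ} {γ : Fin n → ℝ}
  {e d : Fin n → ℝ → ℝ}

theorem cohesive_filter_le_limsup (hW : RowStochastic W) (hγ : ∀ i, 0 ≤ γ i ∧ γ i ≤ 1)
    (hder : ∀ i t, HasDerivAt (e i) ((1 - γ i) * d i t - e i t) t)
    (hmed : ∀ i t, IsWeightedMedian (fun j => e j t) (W i) (d i t))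
    (hbdd : ∀ i, IsBoundedUnder (· ≤ ·) atTop (e i))
    (hcob : ∀ i, IsCoboundedUnder (· ≤ ·) atTop (e i)) {E : ℝ} (hE : 0 < E) :
    Cohesive W (univ.filter fun i => E ≤ limsup (e i) atTop) := by
  set A := univ.filter fun i => E ≤ limsup (e i) atTop
  have hAc : ∀ j ∉ A, limsup (e j) atTop < E := fun j hj =>
    not_le.1 fun h => hj (mem_filter.2 ⟨mem_univ j, h⟩)
  intro i hi
  have hAc' : ∀ᶠ θ in 𝓝[<] E, ∀ j ∉ A, limsup (e j) atTop < θ :=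
    eventually_all.2 fun j => by
      by_cases hj : j ∈ A
      · exact Eventually.of_forall fun _ h => absurd hj h
      · exact ((lt_mem_nhds (hAc j hj)).filter_mono nhdsWithin_le_nhds).mono fun _ h _ => h
  have hθ :
      ∀ᶠ θ in 𝓝[<] E, 0 < θ ∧ θ < E ∧ ∀ j ∉ A, limsup (e j) atTop < θ := by
    filter_upwards [(lt_mem_nhds hE).filter_mono nhdsWithin_le_nhds, self_mem_nhdsWithin, hAc']
      with θ h0 hE' hA using ⟨h0, hE', hA⟩
  obtain ⟨θ, hθ0, hθE, hθA⟩ := hθ.exists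
  have hbelow : ∀ᶠ t in atTop, ∀ j ∉ A, e j t < θ :=
    eventually_all.2 fun j => by
      by_cases hj : j ∈ A
      · exact Eventually.of_forall fun _ h => absurd hj h
      · exact (eventually_lt_of_limsup_lt (hθA j hj) (hbdd j)).mono fun _ h _ => h
  have habove : ∃ᶠ t in atTop, θ < d i t := by
    by_contra! h
    have hd : ∀ᶠ t in atTop, (1 - γ i) * d i t ≤ θ := h.mono fun t ht => by
      nlinarith [hγ i]
    linarith [limsup_le_of_hasDerivAt_sub (hder i) hd (hcob i), (mem_filter.1 hi).2]
  obtain ⟨t, hte, htd⟩ := (hbelow.and_frequently habove).exists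
  have hcompl : ∑ j ∈ Aᶜ, W i j ≤ 1 / 2 := by
    refine (sum_le_sum_of_subset_of_nonneg (fun j hj => ?_) fun j _ _ => hW.1 i j).trans
      (hmed i t).2.1
    exact mem_filter.2 ⟨mem_univ j, (hte j (mem_compl.1 hj)).trans htd⟩
  linarith [sum_add_sum_compl A (W i), hW.2 i]

theorem eventually_lt_of_forall_cohesive_pinned (hW : RowStochastic W)
    (hγ : ∀ i, 0 ≤ γ i ∧ γ i ≤ 1) {Vp : Finset (Fin n)} (hpin : ∀ i ∈ Vp, 0 < γ i)
    (hVp : ∀ M : Finset (Fin n), M.Nonempty → Cohesive W M → ∃ i ∈ M, i ∈ Vp)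
    (hder : ∀ i t, HasDerivAt (e i) ((1 - γ i) * d i t - e i t) t)
    (hmed : ∀ i t, IsWeightedMedian (fun j => e j t) (W i) (d i t)) {E : ℝ} (hE : 0 < E)
    (hbound : ∀ ε > 0, ∀ᶠ t in atTop, ∀ i, |e i t| ≤ E + ε) :
    ∀ᶠ t in atTop, ∀ i, e i t < E := by
  have hbdd : ∀ i, IsBoundedUnder (· ≤ ·) atTop (e i) := fun i =>
    isBoundedUnder_of_eventually_le ((hbound 1 one_pos).mono fun t ht => (abs_le.1 (ht i)).2)
  have hcob : ∀ i, IsCoboundedUnder (· ≤ ·) atTop (e i) := fun i =>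
    (isBoundedUnder_of_eventually_ge
      ((hbound 1 one_pos).mono fun t ht => (abs_le.1 (ht i)).1)).isCoboundedUnder_le
  have hpinned : ∀ i ∈ Vp, limsup (e i) atTop < E := by
    intro i hi
    have hγi := hpin i hi
    have hd : ∀ᶠ t in atTop, (1 - γ i) * d i t ≤ (1 - γ i) * (E + γ i * E) :=
      (hbound _ (mul_pos hγi hE)).mono fun t ht => by
        obtain ⟨k, hk⟩ := (hmed i t).1
        exact mul_le_mul_of_nonneg_left (hk ▸ (le_abs_self _).trans (ht k))
          (sub_nonneg.2 (hγ i).2)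
    nlinarith [limsup_le_of_hasDerivAt_sub (hder i) hd (hcob i), mul_pos (mul_pos hγi hγi) hE]
  have hA : univ.filter (fun i => E ≤ limsup (e i) atTop) = ∅ := by
    by_contra hne
    obtain ⟨j, hjA, hjVp⟩ := hVp _ (nonempty_iff_ne_empty.2 hne)
      (cohesive_filter_le_limsup hW hγ hder hmed hbdd hcob hE)
    exact (hpinned j hjVp).not_ge (mem_filter.1 hjA).2
  exact eventually_all.2 fun i =>
    eventually_lt_of_limsup_lt (not_le.1 (filter_eq_empty_iff.1 hA (mem_univ i))) (hbdd i)

theorem tendsto_zero_of_forall_cohesive_pinned (hW : RowStochastic W)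
    (hγ : ∀ i, 0 ≤ γ i ∧ γ i ≤ 1) {Vp : Finset (Fin n)} (hpin : ∀ i ∈ Vp, 0 < γ i)
    (hVp : ∀ M : Finset (Fin n), M.Nonempty → Cohesive W M → ∃ i ∈ M, i ∈ Vp)
    (hder : ∀ i t, HasDerivAt (e i) ((1 - γ i) * d i t - e i t) t)
    (hmed : ∀ i t, IsWeightedMedian (fun j => e j t) (W i) (d i t)) (i : Fin n) :
    Tendsto (e i) atTop (𝓝 0) := by
  have hS : (univ : Finset (Fin n)).Nonempty := ⟨i, mem_univ i⟩
  set F := fun t => univ.sup' hS fun j => |e j t|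
  have habs : ∀ j t, |e j t| ≤ F t := fun j t => le_sup' (fun j => |e j t|) (mem_univ j)
  have hanti : Antitone F := antitone_sup'_abs_of_hasDerivAt hS (fun j _ t => hder j t)
    fun j _ t => by
      obtain ⟨k, hk⟩ := (hmed j t).1
      rw [abs_mul, ← hk, abs_of_nonneg (sub_nonneg.2 (hγ j).2)]
      nlinarith [hγ j, abs_nonneg (e k t), habs k t]
  have hF0 : ∀ t, 0 ≤ F t := fun t => (abs_nonneg _).trans (habs i t)
  have hF := tendsto_atTop_ciInf hanti ⟨0, by rintro _ ⟨t, rfl⟩; exact hF0 t⟩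
  set E := ⨅ t, F t
  have hEF : ∀ t, E ≤ F t := hanti.le_of_tendsto hF
  rcases (le_ciInf hF0 : 0 ≤ E).eq_or_lt with hE | hE
  · exact squeeze_zero_norm (fun t => habs i t) (hE ▸ hF)
  have hbound : ∀ ε > 0, ∀ᶠ t in atTop, ∀ j, |e j t| ≤ E + ε := fun ε hε =>
    (hF.eventually_le_const (lt_add_of_pos_right E hε)).mono fun t ht j => (habs j t).trans ht
  have hup := eventually_lt_of_forall_cohesive_pinned hW hγ hpin hVp hder hmed hE hbound
  have hdown := eventually_lt_of_forall_cohesive_pinned (e := fun j t => -e j t)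
    (d := fun j t => -d j t) hW hγ hpin hVp
    (fun j t => (hder j t).neg.congr_deriv (by ring)) (fun j t => (hmed j t).neg) hE
    (by simpa only [abs_neg] using hbound)
  obtain ⟨t, ht⟩ := (hup.and hdown).exists
  have : F t < E := (sup'_lt_iff hS).2 fun j _ => abs_lt.2 ⟨by linarith [ht.2 j], ht.1 j⟩
  exact absurd this (hEF t).not_gt

end ErrorDynamics

theorem tendsto_flow_of_forall_cohesive_pinned {n : ℕ} {W : Matrix (Fin n) (Fin n) ℝ}
    (hW : RowStochastic W) {Med : (Fin n → ℝ) → Fin n → ℝ} (hMed : IsMedSelection W Med)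
    {Vp : Finset (Fin n)} {γ : Fin n → ℝ} {u : ℝ} (hγ : ∀ i, 0 ≤ γ i ∧ γ i ≤ 1)
    (hpin : ∀ i ∈ Vp, 0 < γ i)
    (hVp : ∀ M : Finset (Fin n), M.Nonempty → Cohesive W M → ∃ i ∈ M, i ∈ Vp)
    {φ : (Fin n → ℝ) → ℝ → (Fin n → ℝ)}
    (hφ : IsFlow (fun x i => γ i * u + (1 - γ i) * Med x i - x i) φ) (x0 : Fin n → ℝ) :
    Tendsto (φ x0) atTop (𝓝 fun _ => u) := by
  refine tendsto_pi_nhds.2 fun i => ?_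
  have h := tendsto_zero_of_forall_cohesive_pinned (e := fun j t => φ x0 t j - u)
    (d := fun j t => Med (φ x0 t) j - u) hW hγ hpin hVp
    (fun j t => ((hasDerivAt_pi.1 ((hφ x0).2 t) j).sub_const u).congr_deriv (by ring))
    (fun j t => (hMed (φ x0 t) j).1.sub_const u) i
  simpa using h.add_const u

/-- Pinning controllability of the CTWM dynamics: under the pinned dynamics
`ẋᵢ = γᵢ u + (1 - γᵢ) Medᵢ(x;W) - xᵢ`, every solution converges to the consensus
vector `u·1` from every initial condition if and only if every (nonempty) cohesive
set of `G(W)` contains at least one pinned agent. -/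
theorem ctwm_pinning_controllability {n : ℕ}
    (W : Matrix (Fin n) (Fin n) ℝ) (hW : RowStochastic W)
    (Med : (Fin n → ℝ) → Fin n → ℝ) (hMed : IsMedSelection W Med)
    (Vp : Finset (Fin n)) (γ : Fin n → ℝ) (u : ℝ)
    (hγp : ∀ i ∈ Vp, 0 < γ i ∧ γ i ≤ 1) (hγu : ∀ i ∉ Vp, γ i = 0)
    (φ : (Fin n → ℝ) → ℝ → (Fin n → ℝ))
    (hφ : IsFlow (fun x i => γ i * u + (1 - γ i) * Med x i - x i) φ) :
    (∀ x0 : Fin n → ℝ, Tendsto (φ x0) atTop (𝓝 (fun _ : Fin n => u))) ↔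
    (∀ M : Finset (Fin n), M.Nonempty → Cohesive W M → ∃ i ∈ M, i ∈ Vp) := by
  constructor
  · intro hconv M hM hcoh
    by_contra! hunpinned
    obtain ⟨i, hi⟩ := hM
    have hstuck : ∀ᶠ t in atTop, φ (fun _ => u + 1) t i = u + 1 :=
      (eventually_ge_atTop 0).mono fun t ht => flow_apply_eq_of_cohesive_unpinned hW hMed hφ
        ⟨i, hi⟩ hcoh (fun j hj => hγu j (hunpinned j hj)) (fun _ _ => rfl) ht hi
    have hlim := tendsto_nhds_unique (tendsto_pi_nhds.1 (hconv _) i)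
      (tendsto_const_nhds.congr' (hstuck.mono fun _ h => h.symm))
    linarith
  · intro hVp
    have hγ : ∀ i, 0 ≤ γ i ∧ γ i ≤ 1 := fun i => by
      by_cases hi : i ∈ Vp
      · exact ⟨(hγp i hi).1.le, (hγp i hi).2⟩
      · simp [hγu i hi]
    exact tendsto_flow_of_forall_cohesive_pinned hW hMed hγ (fun i hi => (hγp i hi).1) hVp hφ
end
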